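/- arXiv:1011.0954 — 6 statements merged into one kernel-verified Lean document; each statement's English description precedes it below -/
import Mathlib

section
/- An n-ary group (G,f) is derived from a binary group (i.e., there is a group structure ∘ on G such that f(x_1,...,x_n) = x_1 ∘ ... ∘ x_n) if and only if G contains an n-ary identity, i.e., an element e such that f(e,...,e,x,e,...,e) = x for all x and all positions of x. -/
/-!
With `n = m + 2` and an `n`-ary identity `e`, put `a * b = f(a, e, …, e, b)` (the binary retract).
Associativity of `f` makes it associative, `e` is a right unit and unique solvability gives right
inverses, so `*` is a group law. Associativity of `f` also lets `e` slide past any entry of a word,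
and together these show by induction that `f(e, …, e, x₁, …, xₖ) = x₁ * ⋯ * xₖ`; for `k = n` this
says that `f` is derived from `*`.
-/

/-- An `n`-ary (polyadic) group: a set `G` with an `n`-ary operation `f`
(encoded on lists; only values on lists of length `n` are relevant) which is
associative and uniquely solvable in every position. -/
structure PolyadicGroup (n : ℕ) (G : Type*) where
  f : List G → G
  assoc : ∀ u v w u' v' w' : List G,
    v.length = n → v'.length = n →
    u.length + w.length = n - 1 → u'.length + w'.length = n - 1 →
    u ++ v ++ w = u' ++ v' ++ w' →
    f (u ++ f v :: w) = f (u' ++ f v' :: w')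
  solv : ∀ (u w : List G) (b : G), u.length + w.length = n - 1 →
    ∃! z : G, f (u ++ z :: w) = b

namespace PolyadicGroup

open List

variable {n m : ℕ} {G : Type*}

def IsIdentity (P : PolyadicGroup n G) (e : G) : Prop :=
  ∀ (x : G) (j k : ℕ), j + k = n - 1 → P.f (replicate j e ++ x :: replicate k e) = x

theorem isIdentity_iff (hn : 0 < n) {P : PolyadicGroup n G} {e : G} :
    P.IsIdentity e ↔ ∀ x : G, ∀ i : ℕ, 1 ≤ i → i ≤ n →
      P.f (replicate (i - 1) e ++ x :: replicate (n - i) e) = x := by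
  constructor
  · intro he x i hi hin
    exact he x _ _ (by omega)
  · intro he x j k hjk
    have h := he x (j + 1) (by omega) (by omega)
    rwa [Nat.add_sub_cancel, show n - (j + 1) = k by omega] at h

def retractMul (P : PolyadicGroup (m + 2) G) (e a b : G) : G :=
  P.f (a :: replicate m e ++ [b])

theorem retractMul_assoc (P : PolyadicGroup (m + 2) G) (e a b c : G) :
    P.retractMul e (P.retractMul e a b) c = P.retractMul e a (P.retractMul e b c) := by
  simpa [retractMul] using P.assoc [] (a :: replicate m e ++ [b]) (replicate m e ++ [c])
    (a :: replicate m e) (b :: replicate m e ++ [c]) [] (by simp) (by simp) (by simp) (by simp)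
    (by simp)

theorem exists_retractMul_eq (P : PolyadicGroup (m + 2) G) (e a b : G) :
    ∃ z, P.retractMul e a z = b :=
  (P.solv (a :: replicate m e) [] b (by simp)).exists

section Identity

variable {P : PolyadicGroup (m + 2) G} {e : G}

theorem IsIdentity.retractMul_self (he : P.IsIdentity e) (a : G) : P.retractMul e a e = a := by
  simpa [retractMul, ← replicate_succ'] using he a 0 (m + 1) (by omega)

theorem IsIdentity.self_retractMul (he : P.IsIdentity e) (a : G) : P.retractMul e e a = a :=
  he a (m + 1) 0 (by omega)

noncomputable abbrev toGroup (P : PolyadicGroup (m + 2) G) (he : P.IsIdentity e) : Group G :=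
  letI : Mul G := ⟨P.retractMul e⟩
  letI : One G := ⟨e⟩
  letI : Inv G := ⟨fun a => (P.exists_retractMul_eq e a e).choose⟩
  Group.ofRightAxioms (P.retractMul_assoc e) he.retractMul_self
    (fun a => (P.exists_retractMul_eq e a e).choose_spec)

theorem IsIdentity.f_append_cons_cons (he : P.IsIdentity e) (u w : List G)
    (hlen : u.length + w.length = m) (x : G) :
    P.f (u ++ x :: e :: w) = P.f (u ++ e :: x :: w) := by
  -- expand `x` as `f(e, …, e, x)` and collapse `f(e, …, e, x, e)` one place further left instead
  have h := P.assoc u (e :: replicate m e ++ [x]) (e :: w) (u ++ [e]) (replicate m e ++ [x, e]) w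
    (by simp) (by simp) (by simp; omega) (by simp; omega) (by simp)
  rwa [show P.f (e :: replicate m e ++ [x]) = x from he x (m + 1) 0 (by omega),
    show P.f (replicate m e ++ [x, e]) = x from he x m 1 (by omega), append_assoc] at h

theorem IsIdentity.f_append_cons_replicate (he : P.IsIdentity e) (j : ℕ) (u w : List G)
    (hlen : u.length + j + w.length = m + 1) (x : G) :
    P.f (u ++ x :: replicate j e ++ w) = P.f (u ++ replicate j e ++ x :: w) := by
  induction j generalizing u with
  | zero => simp
  | succ j ih =>
    calc P.f (u ++ x :: replicate (j + 1) e ++ w)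
        = P.f (u ++ x :: e :: (replicate j e ++ w)) := by simp [replicate_succ]
      _ = P.f ((u ++ [e]) ++ x :: replicate j e ++ w) := by
        rw [he.f_append_cons_cons u _ (by simp; omega)]; simp
      _ = P.f (u ++ replicate (j + 1) e ++ x :: w) := by
        rw [ih _ (by simp; omega)]; simp [replicate_succ]


theorem IsIdentity.retractMul_f_replicate_append (he : P.IsIdentity e) (y : G) (l : List G)
    (hl : l.length ≤ m + 1) :
    P.retractMul e y (P.f (replicate (m + 2 - l.length) e ++ l)) =
      P.f (y :: replicate (m + 1 - l.length) e ++ l) := by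
  have h := P.assoc (y :: replicate m e) (replicate (m + 2 - l.length) e ++ l) []
    [] (y :: replicate (m + 1) e) (replicate (m + 1 - l.length) e ++ l)
    (by simp; omega) (by simp) (by simp) (by simp; omega)
    (by simp only [cons_append, nil_append, append_nil, ← append_assoc, ← replicate_add,
      show m + (m + 2 - l.length) = m + 1 + (m + 1 - l.length) by omega])
  rw [show P.f (y :: replicate (m + 1) e) = y from he y 0 (m + 1) (by omega)] at h
  simpa [retractMul] using h

variable [Group G]

theorem IsIdentity.eq_one (he : P.IsIdentity e)
    (hmul : ∀ a b : G, a * b = P.retractMul e a b) : e = 1 := by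
  simpa [← hmul] using he.self_retractMul 1

theorem IsIdentity.f_replicate_append (he : P.IsIdentity e)
    (hmul : ∀ a b : G, a * b = P.retractMul e a b) (l : List G) (hl : l.length ≤ m + 2) :
    P.f (replicate (m + 2 - l.length) e ++ l) = l.prod := by
  induction l with
  | nil =>
    simp only [length_nil, Nat.sub_zero, append_nil, prod_nil, ← he.eq_one hmul]
    exact he e 0 (m + 1) (by omega)
  | cons y l ih =>
    rw [length_cons] at hl
    calc P.f (replicate (m + 2 - (l.length + 1)) e ++ y :: l)
        = P.f (y :: replicate (m + 1 - l.length) e ++ l) := by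
          simpa [show m + 2 - (l.length + 1) = m + 1 - l.length by omega] using
            (he.f_append_cons_replicate _ [] l (by simp; omega) y).symm
      _ = y * l.prod := by
          rw [← he.retractMul_f_replicate_append y l (by omega), ih (by omega), hmul]

theorem IsIdentity.f_eq_prod (he : P.IsIdentity e)
    (hmul : ∀ a b : G, a * b = P.retractMul e a b) (l : List G) (hl : l.length = m + 2) :
    P.f l = l.prod := by
  simpa [hl] using he.f_replicate_append hmul l hl.le

end Identity

end PolyadicGroup

/-- An n-ary group is derived from a binary group iff it has an n-ary identity. -/
theorem derived_iff_identity {n : ℕ} {G : Type*} (hn : 2 ≤ n)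
    (P : PolyadicGroup n G) :
    (∃ _ : Group G, ∀ l : List G, l.length = n → P.f l = l.prod) ↔
    (∃ e : G, ∀ x : G, ∀ i : ℕ, 1 ≤ i → i ≤ n →
      P.f (List.replicate (i - 1) e ++ x :: List.replicate (n - i) e) = x) := by
  constructor
  · rintro ⟨_, hf⟩
    refine ⟨1, fun x i hi hin => ?_⟩
    rw [hf _ (by simp; omega)]
    simp [List.prod_append]
  · rintro ⟨e, he⟩
    obtain ⟨m, rfl⟩ : ∃ m, n = m + 2 := ⟨n - 2, by omega⟩
    have he : P.IsIdentity e := (PolyadicGroup.isIdentity_iff (by omega)).mpr he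
    let := P.toGroup he
    exact ⟨inferInstance, he.f_eq_prod (fun _ _ => rfl)⟩
end

section
/- Let (G,f) be an n-ary group and a ∈ G a fixed element. Then the set G*_a = G × Z_{n-1} with operation (x,i)·(y,j) = (f_*(x, a^{(i)}, y, a^{(j)}, ā, a^{(n-2-i*j)}), i*j), where i*j ≡ i+j+1 (mod n-1), a^{(t)} denotes a repeated t times, ā is the skew element of a, and f_* means applying f once or twice as needed by the total length, is a group (the Post cover of G). Its identity element is (ā, n-2). -/
noncomputable def PolyadicGroup.skew {n : ℕ} {G : Type*} (P : PolyadicGroup n G)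
    (x : G) : G :=
  (P.solv (List.replicate (n - 1) x) [] x (by simp)).choose

def PolyadicGroup.fstar {n : ℕ} {G : Type*} (P : PolyadicGroup n G)
    (l : List G) : G :=
  if l.length = n then P.f l else P.f (P.f (l.take n) :: l.drop n)

noncomputable def postMul {n : ℕ} {G : Type*} (P : PolyadicGroup n G) (a : G)
    (p q : G × ZMod (n - 1)) : G × ZMod (n - 1) :=
  (P.fstar (p.1 :: (List.replicate p.2.val a ++ q.1 ::
      (List.replicate q.2.val a ++ P.skew a ::
        List.replicate (n - 2 - (p.2 + q.2 + 1).val) a))),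
    p.2 + q.2 + 1)

theorem ZMod.exists_val_add_add_one {m : ℕ} [NeZero m] (i j : ZMod m) :
    ∃ d ≤ 1, (i + j + 1).val + d * m = i.val + j.val + 1 := by
  have h : (i + j + 1).val = (i.val + j.val + 1) % m := by
    rw [← ZMod.val_natCast]; push_cast; simp
  refine ⟨(i.val + j.val + 1) / m, ?_, by rw [h]; exact Nat.mod_add_div' _ _⟩
  have := i.val_lt
  have := j.val_lt
  exact Nat.le_of_lt_succ ((Nat.div_lt_iff_lt_mul (NeZero.pos m)).2 (by omega))

theorem ZMod.natCast_sub_two_eq_neg_one {n : ℕ} (hn : 2 ≤ n) :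
    ((n - 2 : ℕ) : ZMod (n - 1)) = -1 := by
  have h : ((n - 2 + 1 : ℕ) : ZMod (n - 1)) = 0 := by
    rw [show n - 2 + 1 = n - 1 by omega, ZMod.natCast_self]
  push_cast at h
  exact eq_neg_of_add_eq_zero_left h

namespace PolyadicGroup

variable {n : ℕ} {G : Type*} (P : PolyadicGroup n G)

def fIter : ℕ → List G → G
  | 0, l => P.f l
  | k + 1, l => fIter k (P.f (l.take n) :: l.drop n)

@[simp]
theorem fIter_zero (l : List G) : P.fIter 0 l = P.f l := rfl

theorem fIter_succ_append {k : ℕ} {v : List G} (hv : v.length = n) (w : List G) :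
    P.fIter (k + 1) (v ++ w) = P.fIter k (P.f v :: w) := by
  rw [fIter, List.take_left' hv, List.drop_left' hv]

theorem fIter_add_append (hn : 0 < n) {j : ℕ} {v : List G} (hv : v.length = n + j * (n - 1))
    (k : ℕ) (w : List G) : P.fIter (j + k + 1) (v ++ w) = P.fIter k (P.fIter j v :: w) := by
  induction j generalizing v with
  | zero => simpa using P.fIter_succ_append (by simpa using hv) w
  | succ j ih =>
    obtain ⟨v₁, v₂, rfl, hv₁⟩ : ∃ v₁ v₂, v = v₁ ++ v₂ ∧ v₁.length = n :=
      ⟨_, _, (List.take_append_drop n v).symm, by simp [hv]⟩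
    have hv' : (P.f v₁ :: v₂).length = n + j * (n - 1) := by
      simp only [List.length_append, List.length_cons, Nat.add_mul] at hv ⊢; omega
    rw [show j + 1 + k + 1 = j + k + 1 + 1 by ring, List.append_assoc,
      P.fIter_succ_append hv₁, ← List.cons_append, ih hv', P.fIter_succ_append hv₁]

theorem fIter_one_append_append {u v w : List G} (hv : v.length = n)
    (huw : u.length + w.length = n - 1) : P.fIter 1 (u ++ v ++ w) = P.f (u ++ P.f v :: w) :=
  (P.assoc u v w [] _ _ hv (by simp [hv]; omega) huw (by simp [hv]; omega)
    (List.take_append_drop n _).symm).symm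

theorem fIter_succ_append_append (hn : 0 < n) {k : ℕ} {u v w : List G} (hv : v.length = n)
    (huw : u.length + w.length = (k + 1) * (n - 1)) :
    P.fIter (k + 1) (u ++ v ++ w) = P.fIter k (u ++ P.f v :: w) := by
  induction k generalizing u w with
  | zero => simpa using P.fIter_one_append_append hv (by simpa using huw)
  | succ k ih =>
    by_cases hu : n ≤ u.length
    · obtain ⟨u₁, u₂, rfl, hu₁⟩ : ∃ u₁ u₂, u = u₁ ++ u₂ ∧ u₁.length = n :=
        ⟨_, _, (List.take_append_drop n u).symm, by simp [hu]⟩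
      have ih' := ih (u := P.f u₁ :: u₂) (w := w)
        (by simp only [List.length_append, List.length_cons, Nat.add_mul] at huw ⊢; omega)
      simp only [List.append_assoc] at ih' ⊢
      rw [P.fIter_succ_append hu₁, P.fIter_succ_append hu₁]
      exact ih'
    · obtain ⟨w₁, w₂, rfl, hw₁⟩ :
          ∃ w₁ w₂, w = w₁ ++ w₂ ∧ u.length + w₁.length = n - 1 :=
        ⟨_, _, (List.take_append_drop (n - 1 - u.length) w).symm, by
          simp only [Nat.add_mul] at huw; simp; omega⟩
      have hY : (u ++ v ++ w₁).length = n + 1 * (n - 1) := by simp [hv]; omega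
      have hY' : (u ++ P.f v :: w₁).length = n := by simp; omega
      calc P.fIter (k + 1 + 1) (u ++ v ++ (w₁ ++ w₂))
          = P.fIter k (P.fIter 1 (u ++ v ++ w₁) :: w₂) := by
            rw [← P.fIter_add_append hn hY, show 1 + k + 1 = k + 1 + 1 by ring,
              List.append_assoc _ w₁]
        _ = P.fIter (k + 1) (u ++ P.f v :: (w₁ ++ w₂)) := by
            rw [P.fIter_one_append_append hv hw₁, ← P.fIter_succ_append hY', List.append_assoc,
              List.cons_append]

theorem fIter_add_append_append (hn : 0 < n) {j k : ℕ} {u v w : List G}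
    (hv : v.length = n + j * (n - 1)) (huw : u.length + w.length = (k + 1) * (n - 1)) :
    P.fIter (j + k + 1) (u ++ v ++ w) = P.fIter k (u ++ P.fIter j v :: w) := by
  induction j generalizing v with
  | zero => simpa using P.fIter_succ_append_append hn (by simpa using hv) huw
  | succ j ih =>
    obtain ⟨v₁, v₂, rfl, hv₁⟩ : ∃ v₁ v₂, v = v₁ ++ v₂ ∧ v₁.length = n :=
      ⟨_, _, (List.take_append_drop n v).symm, by simp [hv]⟩
    have hv' : (P.f v₁ :: v₂).length = n + j * (n - 1) := by
      simp only [List.length_append, List.length_cons, Nat.add_mul] at hv ⊢; omega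
    rw [show j + 1 + k + 1 = j + k + 1 + 1 by ring,
      show u ++ (v₁ ++ v₂) ++ w = u ++ v₁ ++ (v₂ ++ w) by simp,
      P.fIter_succ_append_append hn hv₁
        (by simp only [List.length_append, Nat.add_mul] at hv huw ⊢; omega),
      ← List.cons_append, ← List.append_assoc, ih hv', P.fIter_succ_append hv₁]

theorem exists_fIter_cons_eq (hn : 0 < n) {k : ℕ} {w : List G} (hw : w.length = (k + 1) * (n - 1))
    (b : G) : ∃ y, P.fIter k (y :: w) = b := by
  induction k generalizing w b with
  | zero =>
    obtain ⟨y, hy, -⟩ := P.solv [] w b (by simpa using hw)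
    exact ⟨y, hy⟩
  | succ k ih =>
    obtain ⟨w₁, w₂, rfl, hw₁⟩ : ∃ w₁ w₂, w = w₁ ++ w₂ ∧ w₁.length = n - 1 :=
      ⟨_, _, (List.take_append_drop (n - 1) w).symm, by
        simp only [Nat.add_mul] at hw; simp; omega⟩
    obtain ⟨c, hc⟩ := ih (w := w₂)
      (by simp only [List.length_append, Nat.add_mul] at hw ⊢; omega) b
    obtain ⟨y, hy, -⟩ := P.solv [] w₁ c (by simpa using hw₁)
    refine ⟨y, ?_⟩
    rw [← List.cons_append, P.fIter_succ_append (by simp; omega)]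
    exact hy ▸ hc

-- The number of applications of `f` is read off the length, so the value is junk unless the
-- length is `n + k * (n - 1)`.
def eval (l : List G) : G := P.fIter ((l.length - n) / (n - 1)) l

theorem eval_eq_fIter (hn : 2 ≤ n) {k : ℕ} {l : List G} (hl : l.length = n + k * (n - 1)) :
    P.eval l = P.fIter k l := by
  rw [eval, hl, Nat.add_sub_cancel_left, Nat.mul_div_cancel _ (by omega)]

theorem eval_eq_f {l : List G} (hl : l.length = n) : P.eval l = P.f l := by
  simp [eval, hl]

theorem fstar_eq_eval (hn : 2 ≤ n) {d : ℕ} (hd : d ≤ 1) {l : List G}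
    (hl : l.length = n + d * (n - 1)) : P.fstar l = P.eval l := by
  rw [P.eval_eq_fIter hn hl]
  interval_cases d
  · rw [fstar, if_pos (by simpa using hl), fIter_zero]
  · rw [fstar, if_neg (by omega)]
    rfl

theorem eval_append_eval_cons (hn : 2 ≤ n) {j k : ℕ} {u v w : List G}
    (hv : v.length = n + j * (n - 1)) (huw : u.length + w.length = (k + 1) * (n - 1)) :
    P.eval (u ++ P.eval v :: w) = P.eval (u ++ v ++ w) := by
  rw [P.eval_eq_fIter hn hv, P.eval_eq_fIter hn (k := k), P.eval_eq_fIter hn (k := j + k + 1),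
    P.fIter_add_append_append (by omega) hv huw]
  · simp only [List.length_append, Nat.add_mul] at huw ⊢; omega
  · simp only [List.length_append, List.length_cons, Nat.add_mul] at huw ⊢; omega

theorem exists_eval_cons_eq (hn : 2 ≤ n) {k : ℕ} {w : List G}
    (hw : w.length = (k + 1) * (n - 1)) (b : G) : ∃ y, P.eval (y :: w) = b := by
  obtain ⟨y, hy⟩ := P.exists_fIter_cons_eq (by omega) hw b
  refine ⟨y, ?_⟩
  rwa [P.eval_eq_fIter hn (k := k)]
  simp only [List.length_cons, Nat.add_mul] at hw ⊢; omega

theorem eval_append_neutral_append (hn : 2 ≤ n) {u e w : List G} (hu : u ≠ [])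
    (he : e.length = n - 1) (hfix : ∀ x, P.f (x :: e) = x) {k : ℕ}
    (hl : (u ++ w).length = n + k * (n - 1)) : P.eval (u ++ e ++ w) = P.eval (u ++ w) := by
  obtain ⟨u, c, rfl⟩ := (List.eq_nil_or_concat' u).resolve_left hu
  have hce : (c :: e).length = n + 0 * (n - 1) := by simp; omega
  rw [show u ++ [c] ++ e ++ w = u ++ (c :: e) ++ w by simp,
    ← P.eval_append_eval_cons hn hce (k := k), P.eval_eq_f (l := c :: e) (by simpa using hce),
    hfix]
  · simp
  · simp [Nat.add_mul] at hl ⊢; omega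

theorem f_replicate_skew (x : G) : P.f (List.replicate (n - 1) x ++ [P.skew x]) = x :=
  (P.solv (List.replicate (n - 1) x) [] x (by simp)).choose_spec.1

-- Both sides solve `f (a^(n-1-t), _, a^t) = f (a^n)`.
theorem f_replicate_skew_replicate (hn : 0 < n) (a : G) {t : ℕ} (ht : t ≤ n - 1) :
    P.f (List.replicate t a ++ P.skew a :: List.replicate (n - 1 - t) a) = a := by
  have hsplit : List.replicate (n - 1) a = List.replicate (n - 1 - t) a ++ List.replicate t a := by
    rw [List.replicate_append_replicate, Nat.sub_add_cancel ht]
  have key := P.assoc (List.replicate (n - 1 - t) a)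
    (List.replicate t a ++ P.skew a :: List.replicate (n - 1 - t) a) (List.replicate t a)
    [] (List.replicate (n - 1) a ++ [P.skew a]) (List.replicate (n - 1) a)
    (by simp; omega) (by simp; omega) (by simp; omega) (by simp)
    (by simp only [hsplit, List.append_assoc, List.cons_append, List.nil_append])
  rw [f_replicate_skew, List.nil_append] at key
  refine (P.solv _ _ _ (by simp; omega)).unique key ?_
  rw [← List.replicate_succ, ← List.replicate_succ, List.replicate_append_replicate]
  congr 2
  omega

-- Write `x = f (z, c^(n-1))` and rebracket so that `f (c :: e)` appears.
theorem forall_f_cons_eq_self (hn : 2 ≤ n) {e : List G} (he : e.length = n - 1) {c : G}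
    (hc : P.f (c :: e) = c) : ∀ x, P.f (x :: e) = x := by
  intro x
  obtain ⟨z, hz, -⟩ := P.solv [] (List.replicate (n - 1) c) x (by simp)
  have hrep : List.replicate (n - 1) c = List.replicate (n - 2) c ++ [c] := by
    rw [← List.replicate_succ']; congr 1; omega
  have key := P.assoc [] (z :: List.replicate (n - 1) c) e (z :: List.replicate (n - 2) c)
    (c :: e) [] (by simp; omega) (by simp; omega) (by simp [he]) (by simp; omega) (by simp [hrep])
  rw [List.nil_append] at hz key
  rw [hz, hc, List.cons_append, ← hrep, hz] at key
  exact key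

theorem forall_f_append_singleton_eq_self (hn : 2 ≤ n) {e : List G} (he : e.length = n - 1)
    {c : G} (hc : P.f (e ++ [c]) = c) : ∀ x, P.f (e ++ [x]) = x := by
  intro x
  obtain ⟨z, hz, -⟩ := P.solv (List.replicate (n - 1) c) [] x (by simp)
  have hrep : List.replicate (n - 1) c = c :: List.replicate (n - 2) c := by
    rw [← List.replicate_succ]; congr 1; omega
  have key := P.assoc e (List.replicate (n - 1) c ++ [z]) [] [] (e ++ [c])
    (List.replicate (n - 2) c ++ [z]) (by simp; omega) (by simp; omega) (by simp [he])
    (by simp; omega) (by simp [hrep])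
  rw [hz, hc, List.nil_append] at key
  rw [key, ← List.cons_append, ← hrep, hz]

theorem f_cons_replicate_skew_replicate (hn : 2 ≤ n) (a : G) {t : ℕ} (ht : t ≤ n - 2)
    (x : G) :
    P.f (x :: (List.replicate t a ++ P.skew a :: List.replicate (n - 2 - t) a)) = x := by
  refine P.forall_f_cons_eq_self hn (c := a) (by simp; omega) ?_ x
  have h := P.f_replicate_skew_replicate (by omega) a (t := t + 1) (by omega)
  rwa [List.replicate_succ, show n - 1 - (t + 1) = n - 2 - t by omega] at h

theorem f_skew_cons_replicate_append (hn : 2 ≤ n) (a x : G) :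
    P.f (P.skew a :: List.replicate (n - 2) a ++ [x]) = x := by
  refine P.forall_f_append_singleton_eq_self hn (c := a) (by simp; omega) ?_ x
  have h := P.f_replicate_skew_replicate (by omega) a (t := 0) (by omega)
  rwa [List.replicate_zero, List.nil_append, show n - 1 - 0 = n - 2 + 1 by omega,
    List.replicate_succ', ← List.cons_append] at h

def postWord (a : G) (p : G × ZMod (n - 1)) : List G := p.1 :: List.replicate p.2.val a

noncomputable def postMulWord (a : G) (p q : G × ZMod (n - 1)) : List G :=
  postWord a p ++ postWord a q ++ P.skew a :: List.replicate (n - 2 - (p.2 + q.2 + 1).val) a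

theorem exists_length_postMulWord (hn : 2 ≤ n) (a : G) (p q : G × ZMod (n - 1)) :
    ∃ d ≤ 1, (P.postMulWord a p q).length = n + d * (n - 1) := by
  have : NeZero (n - 1) := ⟨by omega⟩
  obtain ⟨d, hd, hK⟩ := ZMod.exists_val_add_add_one p.2 q.2
  have := (p.2 + q.2 + 1).val_lt
  exact ⟨d, hd, by simp [postMulWord, postWord]; omega⟩

theorem postMul_fst (hn : 2 ≤ n) (a : G) (p q : G × ZMod (n - 1)) :
    (postMul P a p q).1 = P.eval (P.postMulWord a p q) := by
  obtain ⟨d, hd, hl⟩ := P.exists_length_postMulWord hn a p q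
  rw [← P.fstar_eq_eval hn hd hl]
  simp [postMul, postMulWord, postWord]

theorem eval_append_postWord_postMul (hn : 2 ≤ n) (a : G) (p q : G × ZMod (n - 1))
    {u s : List G} {k : ℕ}
    (hl : (u ++ postWord a (postMul P a p q) ++ s).length = n + k * (n - 1)) :
    P.eval (u ++ postWord a (postMul P a p q) ++ s) =
      P.eval (u ++ postWord a p ++ postWord a q ++ s) := by
  have : NeZero (n - 1) := ⟨by omega⟩
  obtain ⟨d, -, hK⟩ := ZMod.exists_val_add_add_one p.2 q.2
  set K := (p.2 + q.2 + 1).val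
  have hKlt : K < n - 1 := ZMod.val_lt _
  have hw : postWord a (postMul P a p q) = P.eval (P.postMulWord a p q) :: List.replicate K a := by
    rw [postWord, P.postMul_fst hn]; rfl
  have hV : (P.postMulWord a p q).length = n + d * (n - 1) := by
    simp [postMulWord, postWord]; omega
  have hrep : List.replicate (n - 2) a = List.replicate (n - 2 - K) a ++ List.replicate K a := by
    rw [List.replicate_append_replicate]; congr 1; omega
  rw [hw] at hl ⊢
  simp only [List.length_append, List.length_cons, List.length_replicate] at hl
  calc P.eval (u ++ P.eval (P.postMulWord a p q) :: List.replicate K a ++ s)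
      = P.eval (u ++ P.eval (P.postMulWord a p q) :: (List.replicate K a ++ s)) := by simp
    _ = P.eval (u ++ P.postMulWord a p q ++ (List.replicate K a ++ s)) :=
        P.eval_append_eval_cons hn hV (k := k) (by simp [Nat.add_mul]; omega)
    _ = P.eval
          (u ++ postWord a p ++ postWord a q ++ (P.skew a :: List.replicate (n - 2) a) ++ s) := by
        simp only [postMulWord, hrep, List.append_assoc, List.cons_append]; rfl
    _ = P.eval (u ++ postWord a p ++ postWord a q ++ s) :=
        P.eval_append_neutral_append hn (by simp [postWord]) (by simp; omega)
          (fun x => by simpa using P.f_cons_replicate_skew_replicate hn a (t := 0) (by omega) x)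
          (k := k + d) (by simp [postWord, Nat.add_mul]; omega)

theorem postMul_assoc (hn : 2 ≤ n) (a : G) (p q r : G × ZMod (n - 1)) :
    postMul P a (postMul P a p q) r = postMul P a p (postMul P a q r) := by
  have hK : (postMul P a p q).2 + r.2 + 1 = p.2 + (postMul P a q r).2 + 1 := by
    simp only [postMul]; ring
  refine Prod.ext ?_ hK
  obtain ⟨d, -, hd⟩ := P.exists_length_postMulWord hn a (postMul P a p q) r
  obtain ⟨d', -, hd'⟩ := P.exists_length_postMulWord hn a p (postMul P a q r)
  rw [P.postMul_fst hn, P.postMul_fst hn]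
  unfold postMulWord at hd hd' ⊢
  rw [← hK] at hd' ⊢
  set t := P.skew a :: List.replicate (n - 2 - ((postMul P a p q).2 + r.2 + 1).val) a
  calc P.eval (postWord a (postMul P a p q) ++ postWord a r ++ t)
      = P.eval ([] ++ postWord a (postMul P a p q) ++ (postWord a r ++ t)) := by simp
    _ = P.eval ([] ++ postWord a p ++ postWord a q ++ (postWord a r ++ t)) :=
        P.eval_append_postWord_postMul hn a p q (k := d) (by simpa using hd)
    _ = P.eval (postWord a p ++ postWord a q ++ postWord a r ++ t) := by simp
    _ = P.eval (postWord a p ++ postWord a (postMul P a q r) ++ t) :=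
        (P.eval_append_postWord_postMul hn a q r hd').symm

theorem one_postMul (hn : 2 ≤ n) (a : G) (p : G × ZMod (n - 1)) :
    postMul P a (P.skew a, ((n - 2 : ℕ) : ZMod (n - 1))) p = p := by
  have : NeZero (n - 1) := ⟨by omega⟩
  have h2 : ((n - 2 : ℕ) : ZMod (n - 1)) + p.2 + 1 = p.2 := by
    rw [ZMod.natCast_sub_two_eq_neg_one hn]; ring
  have hval : ((n - 2 : ℕ) : ZMod (n - 1)).val = n - 2 := ZMod.val_natCast_of_lt (by omega)
  have hi := p.2.val_lt
  refine Prod.ext ?_ h2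
  rw [P.postMul_fst hn, postMulWord, h2]
  simp only [postWord, hval]
  have hl : (P.skew a :: List.replicate (n - 2) a ++ [p.1]).length = n + 0 * (n - 1) := by
    simp; omega
  rw [show P.skew a :: List.replicate (n - 2) a ++ p.1 :: List.replicate p.2.val a ++
      P.skew a :: List.replicate (n - 2 - p.2.val) a = [] ++ (P.skew a :: List.replicate (n - 2) a
      ++ [p.1]) ++ (List.replicate p.2.val a ++ P.skew a :: List.replicate (n - 2 - p.2.val) a)
      by simp,
    ← P.eval_append_eval_cons hn hl (k := 0) (by simp; omega),
    P.eval_eq_f (l := P.skew a :: List.replicate (n - 2) a ++ [p.1]) (by simpa using hl),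
    P.f_skew_cons_replicate_append hn, List.nil_append, P.eval_eq_f (by simp; omega),
    P.f_cons_replicate_skew_replicate hn a (by omega)]

theorem exists_postMul_eq_one (hn : 2 ≤ n) (a : G) (p : G × ZMod (n - 1)) :
    ∃ q, postMul P a q p = (P.skew a, ((n - 2 : ℕ) : ZMod (n - 1))) := by
  have : NeZero (n - 1) := ⟨by omega⟩
  set j : ZMod (n - 1) := -(p.2 + 2)
  have h2 : j + p.2 + 1 = ((n - 2 : ℕ) : ZMod (n - 1)) := by
    rw [ZMod.natCast_sub_two_eq_neg_one hn]; ring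
  obtain ⟨d, -, hd⟩ := ZMod.exists_val_add_add_one j p.2
  rw [h2, ZMod.val_natCast_of_lt (by omega)] at hd
  obtain ⟨y, hy⟩ := P.exists_eval_cons_eq hn (k := d)
    (w := List.replicate j.val a ++ postWord a p ++
      P.skew a :: List.replicate (n - 2 - (j + p.2 + 1).val) a)
    (by simp [postWord, h2, ZMod.val_natCast_of_lt (show n - 2 < n - 1 by omega), Nat.add_mul]
        omega)
    (P.skew a)
  exact ⟨(y, j), Prod.ext (by rw [P.postMul_fst hn]; exact hy) h2⟩

noncomputable abbrev postCoverGroup (hn : 2 ≤ n) (a : G) : Group (G × ZMod (n - 1)) :=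
  letI : Mul (G × ZMod (n - 1)) := ⟨postMul P a⟩
  letI : One (G × ZMod (n - 1)) := ⟨(P.skew a, ((n - 2 : ℕ) : ZMod (n - 1)))⟩
  letI : Inv (G × ZMod (n - 1)) := ⟨fun p => (P.exists_postMul_eq_one hn a p).choose⟩
  Group.ofLeftAxioms (P.postMul_assoc hn a) (P.one_postMul hn a)
    (fun p => (P.exists_postMul_eq_one hn a p).choose_spec)

end PolyadicGroup

/-- Post's cover `G*_a = G × ℤ_{n-1}` with `postMul` is a group with
identity `(ā, n-2)`. -/
theorem post_cover_is_group {n : ℕ} {G : Type*} (hn : 2 ≤ n)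
    (P : PolyadicGroup n G) (a : G) :
    (∀ p q r : G × ZMod (n - 1),
        postMul P a (postMul P a p q) r = postMul P a p (postMul P a q r)) ∧
    (∀ p : G × ZMod (n - 1),
        postMul P a (P.skew a, ((n - 2 : ℕ) : ZMod (n - 1))) p = p ∧
        postMul P a p (P.skew a, ((n - 2 : ℕ) : ZMod (n - 1))) = p) ∧
    (∀ p : G × ZMod (n - 1), ∃ q : G × ZMod (n - 1),
        postMul P a q p = (P.skew a, ((n - 2 : ℕ) : ZMod (n - 1))) ∧
        postMul P a p q = (P.skew a, ((n - 2 : ℕ) : ZMod (n - 1)))) := by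
  let := P.postCoverGroup hn a
  exact ⟨mul_assoc, fun p => ⟨one_mul p, mul_one p⟩,
    fun p => ⟨p⁻¹, inv_mul_cancel p, mul_inv_cancel p⟩⟩
end

section
/- Post's coset theorem: Let (G,f) be an n-ary group, a ∈ G, and G*_a its Post cover. Then H = {(x, n-2) : x ∈ G} is a normal subgroup of G*_a, and the quotient G*_a/H is isomorphic to Z_{n-1}. Moreover, identifying G with the subset {(x,0) : x ∈ G}, G is a coset of H, and for all x_1,...,x_n ∈ G one has (f(x_1,...,x_n), 0) = (x_1,0)·(x_2,0)·...·(x_n,0). -/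
namespace PostAux
variable {n : ℕ} {G : Type*} (P : PolyadicGroup n G)

lemma cancel (u w : List G) (h : u.length + w.length = n - 1) {y z : G}
    (hyz : P.f (u ++ y :: w) = P.f (u ++ z :: w)) : y = z :=
  (P.solv u w (P.f (u ++ z :: w)) h).unique hyz rfl

lemma skew_spec (a : G) :
    P.f (List.replicate (n - 1) a ++ [P.skew a]) = a :=
  (P.solv (List.replicate (n - 1) a) [] a (by simp)).choose_spec.1

lemma lemL (hn : 2 ≤ n) (a y : G) :
    P.f (P.skew a :: (List.replicate (n - 2) a ++ [y])) = y := by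
  apply cancel P (List.replicate (n - 1) a) [] (by simp)
  have h := P.assoc (List.replicate (n - 1) a)
      (P.skew a :: (List.replicate (n - 2) a ++ [y])) []
      [] (List.replicate (n - 1) a ++ [P.skew a]) (List.replicate (n - 2) a ++ [y])
      (by simp; try omega) (by simp; try omega) (by simp) (by simp; try omega)
      (by simp)
  rw [h, skew_spec]
  simp only [List.nil_append]
  congr 1
  rw [show n - 1 = (n-2)+1 by omega, List.replicate_succ]
  simp

lemma lemR (hn : 2 ≤ n) (a y : G) :
    P.f (y :: P.skew a :: List.replicate (n - 2) a) = y := by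
  apply cancel P [] (List.replicate (n - 1) a) (by simp)
  have h := P.assoc [] (y :: P.skew a :: List.replicate (n - 2) a)
      (List.replicate (n - 1) a)
      [y] (P.skew a :: (List.replicate (n - 2) a ++ [a])) (List.replicate (n - 2) a)
      (by simp; try omega) (by simp; try omega) (by simp; try omega) (by simp; try omega)
      (by simp [show n - 1 = (n-2)+1 by omega, List.replicate_succ])
  rw [show ([] : List G) ++ P.f (y :: P.skew a :: List.replicate (n - 2) a)
        :: List.replicate (n - 1) a
      = [] ++ P.f (y :: P.skew a :: List.replicate (n - 2) a)
        :: List.replicate (n - 1) a from rfl]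
  rw [h, lemL P hn]
  simp only [List.nil_append]
  congr 1
  rw [show n - 1 = (n-2)+1 by omega, List.replicate_succ]
  simp



lemma key (hn : 2 ≤ n) (a : G) [inst : Group (G × ZMod (n - 1))]
    (hmul : ∀ p q : G × ZMod (n - 1), p * q = postMul P a p q) :
    ∀ l : List G, 1 ≤ l.length → l.length ≤ n - 1 →
      (l.map fun x => ((x, 0) : G × ZMod (n - 1))).prod
        = (P.f (l ++ P.skew a :: List.replicate (n - 1 - l.length) a),
           ((l.length - 1 : ℕ) : ZMod (n - 1))) := by
  haveI : NeZero (n - 1) := ⟨by omega⟩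
  intro l
  induction l using List.reverseRecOn with
  | nil => simp
  | append_singleton l x ih =>
    intro _ hlen
    rcases Nat.eq_zero_or_pos l.length with h0 | hpos
    · have hl : l = [] := List.length_eq_zero_iff.mp h0
      subst hl
      simp only [List.nil_append, List.map_cons, List.map_nil, List.prod_cons,
        List.prod_nil, mul_one, List.length_singleton]
      refine Prod.ext ?_ (by simp)
      show x = P.f ([x] ++ P.skew a :: List.replicate (n - 1 - 1) a)
      rw [show n - 1 - 1 = n - 2 by omega]
      exact (lemR P hn a x).symm
    · have hk : l.length ≤ n - 2 := by
        have := hlen; simp [List.length_append] at this; omega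
      have ihh := ih hpos (by omega)
      rw [List.map_append, List.prod_append, ihh]
      simp only [List.map_cons, List.map_nil, List.prod_cons, List.prod_nil, mul_one]
      rw [hmul]
      unfold postMul
      have hsnd : ((l.length - 1 : ℕ) : ZMod (n - 1)) + 0 + 1
          = ((l.length : ℕ) : ZMod (n - 1)) := by
        rw [add_zero, show ((l.length : ℕ) : ZMod (n - 1))
            = ((l.length - 1 + 1 : ℕ) : ZMod (n - 1)) by congr 1; omega,
          Nat.cast_add, Nat.cast_one]
      have hv1 : (((l.length - 1 : ℕ) : ZMod (n - 1))).val = l.length - 1 :=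
        ZMod.val_natCast_of_lt (by omega)
      have hv3 : (((l.length : ℕ) : ZMod (n - 1))).val = l.length :=
        ZMod.val_natCast_of_lt (by omega)
      simp only [hsnd, hv1, hv3, ZMod.val_zero, List.replicate_zero, List.nil_append]
      refine Prod.ext ?_ ?_
      · show P.fstar _ = _
        rw [PolyadicGroup.fstar, if_pos (by simp; omega)]
        have h := P.assoc []
          (l ++ P.skew a :: List.replicate (n - 1 - l.length) a)
          (List.replicate (l.length - 1) a ++
            x :: P.skew a :: List.replicate (n - 2 - l.length) a)
          l (P.skew a :: (List.replicate (n - 2) a ++ [x]))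
          (P.skew a :: List.replicate (n - 2 - l.length) a)
          (by simp; try omega) (by simp; try omega) (by simp; try omega)
          (by simp; try omega)
          (by
            simp only [List.nil_append, List.cons_append, List.append_assoc]
            congr 1
            rw [show n - 2 = (n - 1 - l.length) + (l.length - 1) by omega,
              List.replicate_add, List.append_assoc])
        simp only [List.nil_append] at h
        rw [h, lemL P hn]
        show _ = P.f ((l ++ [x]) ++ P.skew a ::
            List.replicate (n - 1 - (l ++ [x]).length) a)
        simp only [List.append_assoc, List.cons_append, List.nil_append,
          List.length_append, List.length_cons, List.length_nil]
        rw [show n - 2 - l.length = n - 1 - (l.length + (0 + 1)) by omega]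
      · show _ = ((( (l ++ [x]).length - 1 : ℕ)) : ZMod (n - 1))
        simp [List.length_append]

lemma final (hn : 2 ≤ n) (a : G) [inst : Group (G × ZMod (n - 1))]
    (hmul : ∀ p q : G × ZMod (n - 1), p * q = postMul P a p q) :
    ∀ l : List G, l.length = n →
      ((P.f l, 0) : G × ZMod (n - 1)) =
        (l.map fun x => ((x, 0) : G × ZMod (n - 1))).prod := by
  haveI : NeZero (n - 1) := ⟨by omega⟩
  intro l hl
  rcases List.eq_nil_or_concat l with rfl | ⟨l', x, rfl⟩
  · simp at hl; omega
  · have hl' : l'.length = n - 1 := by simp at hl; omega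
    rw [List.concat_eq_append] at *
    rw [List.map_append, List.prod_append,
      key P hn a hmul l' (by omega) (by omega)]
    simp only [List.map_cons, List.map_nil, List.prod_cons, List.prod_nil, mul_one]
    rw [hmul]
    unfold postMul
    rw [hl']
    have hsnd : ((n - 1 - 1 : ℕ) : ZMod (n - 1)) + 0 + 1 = 0 := by
      rw [add_zero, show ((n - 1 - 1 : ℕ) : ZMod (n - 1)) + 1
          = ((n - 1 - 1 + 1 : ℕ) : ZMod (n - 1)) by push_cast; ring,
        show n - 1 - 1 + 1 = n - 1 by omega, ZMod.natCast_self]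
    have hv1 : (((n - 1 - 1 : ℕ) : ZMod (n - 1))).val = n - 2 := by
      rw [show n - 1 - 1 = n - 2 by omega]
      exact ZMod.val_natCast_of_lt (by omega)
    simp only [hsnd, hv1, ZMod.val_zero, List.replicate_zero, List.nil_append,
      Nat.sub_self, Nat.sub_zero]
    refine Prod.ext ?_ (by simp)
    show P.f (l' ++ [x]) = P.fstar _
    rw [PolyadicGroup.fstar, if_neg (by simp; omega)]
    rw [show (P.f (l' ++ [P.skew a]) ::
          (List.replicate (n - 2) a ++ x :: P.skew a :: List.replicate (n - 2) a))
        = (P.f (l' ++ [P.skew a]) :: (List.replicate (n - 2) a ++ [x]))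
            ++ (P.skew a :: List.replicate (n - 2) a) by simp]
    rw [List.take_left' (by simp; omega), List.drop_left' (by simp; omega)]
    have h1 := P.assoc [] (l' ++ [P.skew a]) (List.replicate (n - 2) a ++ [x])
        l' (P.skew a :: (List.replicate (n - 2) a ++ [x])) []
        (by simp; try omega) (by simp; try omega) (by simp; try omega)
        (by simp; try omega) (by simp)
    simp only [List.nil_append, List.append_nil] at h1
    rw [h1, lemL P hn]
    exact (lemR P hn a _).symm

end PostAux

/-- Post's coset theorem. -/
theorem post_coset_theorem {n : ℕ} {G : Type*} (hn : 2 ≤ n)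
    (P : PolyadicGroup n G) (a : G)
    [inst : Group (G × ZMod (n - 1))]
    (hmul : ∀ p q : G × ZMod (n - 1), p * q = postMul P a p q) :
    ∃ H : Subgroup (G × ZMod (n - 1)), ∃ hN : H.Normal,
      (H : Set (G × ZMod (n - 1))) =
        {p : G × ZMod (n - 1) | p.2 = ((n - 2 : ℕ) : ZMod (n - 1))} ∧
      (letI := hN;
        Nonempty ((G × ZMod (n - 1)) ⧸ H ≃* Multiplicative (ZMod (n - 1)))) ∧
      (∃ g : G × ZMod (n - 1),
        {p : G × ZMod (n - 1) | p.2 = 0} =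
          (fun h => g * h) '' (H : Set (G × ZMod (n - 1)))) ∧
      (∀ l : List G, l.length = n →
        ((P.f l, 0) : G × ZMod (n - 1)) =
          (l.map fun x => ((x, 0) : G × ZMod (n - 1))).prod) := by
  haveI : NeZero (n - 1) := ⟨by omega⟩
  have hone : (1 : G × ZMod (n - 1)).2 + 1 = 0 := by
    have h := congrArg Prod.snd ((one_mul (1 : G × ZMod (n - 1))).symm.trans (hmul 1 1))
    simp only [postMul] at h
    linear_combination -h
  have hc : ((n - 2 : ℕ) : ZMod (n - 1)) + 1 = 0 := by
    rw [show ((n - 2 : ℕ) : ZMod (n - 1)) + 1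
        = ((n - 2 + 1 : ℕ) : ZMod (n - 1)) by push_cast; ring,
      show n - 2 + 1 = n - 1 by omega, ZMod.natCast_self]
  let φ : (G × ZMod (n - 1)) →* Multiplicative (ZMod (n - 1)) :=
  { toFun := fun p => Multiplicative.ofAdd (p.2 + 1)
    map_one' := by
      show Multiplicative.ofAdd ((1 : G × ZMod (n - 1)).2 + 1) = 1
      rw [hone]; rfl
    map_mul' := fun p q => by
      have h := congrArg Prod.snd (hmul p q)
      simp only [postMul] at h
      show Multiplicative.ofAdd ((p * q).2 + 1) = _
      rw [h, ← ofAdd_add]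
      congr 1
      ring }
  have hφ : ∀ p : G × ZMod (n - 1), φ p = Multiplicative.ofAdd (p.2 + 1) :=
    fun p => rfl
  refine ⟨φ.ker, MonoidHom.normal_ker φ, ?_, ?_, ?_, ?_⟩
  · ext p
    simp only [SetLike.mem_coe, MonoidHom.mem_ker, Set.mem_setOf_eq, hφ,
      ofAdd_eq_one]
    constructor
    · intro h; linear_combination h - hc
    · intro h; linear_combination h + hc
  · exact ⟨QuotientGroup.quotientKerEquivOfSurjective φ (fun k =>
      ⟨(a, Multiplicative.toAdd k - 1), by simp [hφ]⟩)⟩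
  · refine ⟨(a, 0), ?_⟩
    ext p
    simp only [Set.mem_setOf_eq, Set.mem_image, SetLike.mem_coe, MonoidHom.mem_ker]
    constructor
    · intro hp
      refine ⟨(a, 0)⁻¹ * p, ?_, mul_inv_cancel_left _ _⟩
      rw [map_mul, map_inv]
      simp [hφ, hp]
    · rintro ⟨h, hh, rfl⟩
      have h2 := congrArg Prod.snd (hmul (a, 0) h)
      simp only [postMul] at h2
      rw [hφ, ofAdd_eq_one] at hh
      show ((a, (0 : ZMod (n - 1))) * h).2 = 0
      rw [h2]
      linear_combination hh
  · exact fun l hl => PostAux.final P hn a hmul l hl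
end

section
/- Let (G,f) be an n-ary group, Λ : G → GL_m(ℂ) a representation (i.e., Λ(f(x_1,...,x_n)) = Λ(x_1)...Λ(x_n) for all x_i), and a ∈ G. Then the map Λ*_a : G*_a → (der^n(GL_m(ℂ)))*_{Λ(a)} defined by Λ*_a(x,i) = (Λ(x), i) is a group homomorphism. -/
/-- A degree-`m` representation of the n-ary group `(G, f)`:
`Λ(f(x_1,...,x_n)) = Λ(x_1)⋯Λ(x_n)`. -/
def IsNaryRep {n : ℕ} {G : Type*} (P : PolyadicGroup n G) {m : ℕ}
    (Λ : G → Matrix.GeneralLinearGroup (Fin m) ℂ) : Prop :=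
  ∀ l : List G, l.length = n → Λ (P.f l) = (l.map Λ).prod

/-- A set of invertible matrices acts irreducibly on `ℂ^m`:
no invariant subspace other than `⊥` and `⊤`. -/
def IsIrredSet {m : ℕ} (T : Set (Matrix.GeneralLinearGroup (Fin m) ℂ)) : Prop :=
  ∀ W : Submodule ℂ (Fin m → ℂ),
    (∀ g ∈ T, ∀ v ∈ W, Matrix.mulVec (g : Matrix (Fin m) (Fin m) ℂ) v ∈ W) →
    W = ⊥ ∨ W = ⊤

/-- `Λ* : G*_a → GL_m(ℂ)`, `Λ*(x,i) = Λ(x)Λ(a)^i`. -/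
noncomputable def starRep (n : ℕ) {G : Type*} {m : ℕ} (a : G)
    (Λ : G → Matrix.GeneralLinearGroup (Fin m) ℂ) :
    G × ZMod (n - 1) → Matrix.GeneralLinearGroup (Fin m) ℂ :=
  fun p => Λ p.1 * (Λ a) ^ p.2.val

lemma skew_spec {n : ℕ} {G : Type*} (P : PolyadicGroup n G) (x : G) :
    P.f (List.replicate (n - 1) x ++ [P.skew x]) = x :=
  (P.solv (List.replicate (n - 1) x) [] x (by simp)).choose_spec.1

lemma rep_skew {n : ℕ} {G : Type*} (hn : 2 ≤ n) (P : PolyadicGroup n G)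
    {m : ℕ} {Λ : G → Matrix.GeneralLinearGroup (Fin m) ℂ}
    (hΛ : IsNaryRep P Λ) (a : G) :
    Λ (P.skew a) = (Λ a) ^ ((2 : ℤ) - (n : ℤ)) := by
  have h := skew_spec P a
  have hlen : (List.replicate (n - 1) a ++ [P.skew a]).length = n := by
    simp; omega
  have h2 := hΛ _ hlen
  rw [h] at h2
  simp only [List.map_append, List.map_replicate, List.prod_append,
    List.map_cons, List.map_nil, List.prod_cons, List.prod_nil, mul_one,
    List.prod_replicate] at h2
  have h3 : Λ (P.skew a) = ((Λ a) ^ (n - 1))⁻¹ * Λ a := by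
    rw [eq_inv_mul_iff_mul_eq]; exact h2.symm
  have h4 : ((Λ a) ^ (n - 1))⁻¹ * Λ a = (Λ a) ^ ((2 : ℤ) - (n : ℤ)) := by
    rw [← zpow_natCast (Λ a) (n - 1), ← zpow_neg,
      show ((2 : ℤ) - (n : ℤ)) = -((n - 1 : ℕ) : ℤ) + 1 by omega,
      zpow_add, zpow_one]
  rw [h3, h4]

lemma fstar_rep {n : ℕ} {G : Type*} (hn : 2 ≤ n) (P : PolyadicGroup n G)
    {m : ℕ} {Λ : G → Matrix.GeneralLinearGroup (Fin m) ℂ}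
    (hΛ : IsNaryRep P Λ) (l : List G)
    (hl : l.length = n ∨ l.length = 2 * n - 1) :
    Λ (P.fstar l) = (l.map Λ).prod := by
  rcases hl with hl | hl
  · rw [PolyadicGroup.fstar, if_pos hl]; exact hΛ l hl
  · have hne : l.length ≠ n := by omega
    rw [PolyadicGroup.fstar, if_neg hne]
    have h1 : (P.f (l.take n) :: l.drop n).length = n := by
      simp; omega
    rw [hΛ _ h1]
    have h2 : (l.take n).length = n := by simp; omega
    simp only [List.map_cons, List.prod_cons, hΛ _ h2]
    rw [← List.prod_append, ← List.map_append, List.take_append_drop]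

/-- `Λ*_a(x,i) = (Λ(x), i)` is a homomorphism from `G*_a` to the Post cover
of `der^n(GL_m(ℂ))` at `Λ(a)` (whose operation is written out explicitly,
using that the skew of `Λ(a)` is `Λ(a)^{2-n}`). -/
theorem starRep_a_hom {n : ℕ} {G : Type*} (hn : 2 ≤ n)
    (P : PolyadicGroup n G) (a : G) {m : ℕ}
    (Λ : G → Matrix.GeneralLinearGroup (Fin m) ℂ) (hΛ : IsNaryRep P Λ) :
    ∀ p q : G × ZMod (n - 1),
      ((Λ (postMul P a p q).1, (postMul P a p q).2) :
          Matrix.GeneralLinearGroup (Fin m) ℂ × ZMod (n - 1)) =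
        (Λ p.1 * (Λ a) ^ p.2.val * Λ q.1 * (Λ a) ^ q.2.val *
            (Λ a) ^ ((2 : ℤ) - (n : ℤ)) *
            (Λ a) ^ (n - 2 - (p.2 + q.2 + 1).val),
          p.2 + q.2 + 1) := by
  intro p q
  haveI : NeZero (n - 1) := ⟨by omega⟩
  set i := p.2.val with hi
  set j := q.2.val with hj
  set k := (p.2 + q.2 + 1).val with hk
  have hik : i < n - 1 := ZMod.val_lt p.2
  have hjk : j < n - 1 := ZMod.val_lt q.2
  have hkk : k < n - 1 := ZMod.val_lt _
  have hkeq : k = (i + j + 1) % (n - 1) := by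
    rw [hk, ZMod.val_add, ZMod.val_add, ZMod.val_one_eq_one_mod, ← Nat.add_mod,
      hi, hj]
  have hlen : (p.1 :: (List.replicate i a ++ q.1 ::
      (List.replicate j a ++ P.skew a :: List.replicate (n - 2 - k) a))).length
        = n ∨ (p.1 :: (List.replicate i a ++ q.1 ::
      (List.replicate j a ++ P.skew a :: List.replicate (n - 2 - k) a))).length
        = 2 * n - 1 := by
    simp only [List.length_cons, List.length_append, List.length_replicate]
    rcases lt_or_ge (i + j + 1) (n - 1) with hc | hc
    · left
      rw [Nat.mod_eq_of_lt hc] at hkeq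
      omega
    · right
      rw [Nat.mod_eq_sub_mod hc,
        Nat.mod_eq_of_lt (by omega : i + j + 1 - (n - 1) < n - 1)] at hkeq
      omega
  have key := fstar_rep hn P hΛ _ hlen
  rw [Prod.mk.injEq]
  refine ⟨?_, rfl⟩
  rw [show (postMul P a p q).1 = P.fstar (p.1 :: (List.replicate i a ++ q.1 ::
      (List.replicate j a ++ P.skew a :: List.replicate (n - 2 - k) a)))
    from rfl, key]
  simp only [List.map_cons, List.map_append, List.map_replicate,
    List.prod_cons, List.prod_append, List.prod_replicate,
    rep_skew hn P hΛ a]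
  simp only [mul_assoc]
end

section
/- Let (G,f) be an n-ary group, a ∈ G, and Λ : G → GL_m(ℂ) a representation. Then the map Λ* : G*_a → GL_m(ℂ) defined by Λ*(x,i) = Λ(x)Λ(a)^i is a group homomorphism, i.e., an ordinary representation of the Post cover G*_a. -/
/-- `Λ*(x,i) = Λ(x)Λ(a)^i` is an ordinary representation of the Post cover. -/
theorem starRep_is_hom {n : ℕ} {G : Type*} (hn : 2 ≤ n)
    (P : PolyadicGroup n G) (a : G) {m : ℕ}
    (Λ : G → Matrix.GeneralLinearGroup (Fin m) ℂ) (hΛ : IsNaryRep P Λ) :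
    ∀ p q : G × ZMod (n - 1),
      starRep n a Λ (postMul P a p q) = starRep n a Λ p * starRep n a Λ q := by
  have hn1 : n - 1 ≠ 0 := by omega
  haveI : NeZero (n - 1) := ⟨hn1⟩
  -- the skew element represents as an inverse power
  have hspec : P.f (List.replicate (n - 1) a ++ [P.skew a]) = a :=
    (P.solv (List.replicate (n - 1) a) [] a (by simp)).choose_spec.1
  have hΛa : Λ a = (Λ a) ^ (n - 1) * Λ (P.skew a) := by
    have hlen : (List.replicate (n - 1) a ++ [P.skew a]).length = n := by
      simp; omega
    have h := hΛ _ hlen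
    rw [hspec] at h
    simpa using h
  have hskew : Λ (P.skew a) = ((Λ a) ^ (n - 2))⁻¹ := by
    rw [show n - 1 = n - 2 + 1 from by omega, pow_succ'] at hΛa
    rw [mul_assoc] at hΛa
    have h2 : (1 : Matrix.GeneralLinearGroup (Fin m) ℂ) =
        (Λ a) ^ (n - 2) * Λ (P.skew a) :=
      mul_left_cancel (a := Λ a) (by rw [mul_one]; exact hΛa)
    exact eq_inv_of_mul_eq_one_right h2.symm
  -- fstar respects the representation for lists of length n or 2n-1
  have hf2 : ∀ L : List G, L.length = n ∨ L.length = 2 * n - 1 →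
      Λ (P.fstar L) = (L.map Λ).prod := by
    intro L hL
    rcases hL with h | h
    · rw [PolyadicGroup.fstar, if_pos h]; exact hΛ L h
    · rw [PolyadicGroup.fstar, if_neg (by omega)]
      have h1 : (L.take n).length = n := by simp; omega
      have h2 : (P.f (L.take n) :: L.drop n).length = n := by simp; omega
      rw [hΛ _ h2]
      simp only [List.map_cons, List.prod_cons, hΛ _ h1]
      rw [← List.prod_append, ← List.map_append, List.take_append_drop]
  intro p q
  simp only [starRep, postMul]
  have hi : p.2.val < n - 1 := ZMod.val_lt p.2
  have hj : q.2.val < n - 1 := ZMod.val_lt q.2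
  set i := p.2.val with hidef
  set j := q.2.val with hjdef
  set k := (p.2 + q.2 + 1).val with hkdef
  have hklt : k < n - 1 := ZMod.val_lt _
  have hk : k = (i + j + 1) % (n - 1) := by
    have hcast : ((i + j + 1 : ℕ) : ZMod (n - 1)) = p.2 + q.2 + 1 := by
      push_cast
      rw [hidef, hjdef, ZMod.natCast_val, ZMod.natCast_val, ZMod.cast_id, ZMod.cast_id]
    rw [hkdef, ← hcast, ZMod.val_natCast]
  have hcase : i + j + 1 = k ∨ i + j + 1 = k + (n - 1) := by
    have h0 : (n - 1) * ((i + j + 1) / (n - 1)) + (i + j + 1) % (n - 1)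
        = i + j + 1 := Nat.div_add_mod _ _
    rw [← hk] at h0
    have h1 : (i + j + 1) / (n - 1) < 2 := Nat.div_lt_of_lt_mul (by omega)
    interval_cases h : (i + j + 1) / (n - 1) <;> omega
  have hlen : (p.1 :: (List.replicate i a ++ q.1 ::
      (List.replicate j a ++ P.skew a :: List.replicate (n - 2 - k) a))).length = n ∨
      (p.1 :: (List.replicate i a ++ q.1 ::
      (List.replicate j a ++ P.skew a :: List.replicate (n - 2 - k) a))).length
        = 2 * n - 1 := by
    simp only [List.length_cons, List.length_append, List.length_replicate]
    omega
  rw [hf2 _ hlen]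
  have key : ((Λ a) ^ (n - 2))⁻¹ * ((Λ a) ^ (n - 2 - k) * (Λ a) ^ k) = 1 := by
    rw [← pow_add, show n - 2 - k + k = n - 2 from by omega, inv_mul_cancel]
  simp only [List.map_cons, List.map_append, List.map_replicate, List.prod_cons,
    List.prod_append, List.prod_replicate, hskew, mul_assoc, key, mul_one]
end

section
/- The subset {(x,0) : x ∈ G} generates the Post cover G*_a as a group. Consequently, a representation Λ of an n-ary group (G,f) is irreducible if and only if the corresponding representation Λ* of G*_a is irreducible. -/
/-- `f_*(x :: rest)` is surjective in `x` when `rest` has length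
`n - 1` or `2n - 2`. -/
lemma fstar_cons_surj {n : ℕ} {G : Type*} (hn : 2 ≤ n) (P : PolyadicGroup n G)
    (rest : List G) (h : rest.length = n - 1 ∨ rest.length = 2 * n - 2)
    (y : G) : ∃ x, P.fstar (x :: rest) = y := by
  rcases h with h | h
  · obtain ⟨x, hx, -⟩ := P.solv [] rest y (by simp [h])
    refine ⟨x, ?_⟩
    simp only [PolyadicGroup.fstar]
    rw [if_pos (show (x :: rest).length = n by simp [h]; omega)]
    simpa using hx
  · obtain ⟨z, hz, -⟩ := P.solv [] (rest.drop (n - 1)) y (by simp [h]; omega)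
    obtain ⟨x, hx, -⟩ := P.solv [] (rest.take (n - 1)) z (by simp [h]; omega)
    simp only [List.nil_append] at hz hx
    refine ⟨x, ?_⟩
    simp only [PolyadicGroup.fstar]
    rw [if_neg (show ¬ (x :: rest).length = n by simp [h]; omega)]
    have ht : (x :: rest).take n = x :: rest.take (n - 1) := by
      obtain ⟨m, rfl⟩ : ∃ m, n = m + 1 := ⟨n - 1, by omega⟩
      simp
    have hd : (x :: rest).drop n = rest.drop (n - 1) := by
      obtain ⟨m, rfl⟩ : ∃ m, n = m + 1 := ⟨n - 1, by omega⟩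
      simp
    rw [ht, hd, hx, hz]

/-- `{(x,0) : x ∈ G}` generates the Post cover; consequently `Λ` is
irreducible iff `Λ*` is irreducible. -/
theorem generation_and_irreducibility {n : ℕ} {G : Type*} (hn : 2 ≤ n)
    (P : PolyadicGroup n G) (a : G)
    [inst : Group (G × ZMod (n - 1))]
    (hmul : ∀ p q : G × ZMod (n - 1), p * q = postMul P a p q)
    {m : ℕ} (Λ : G → Matrix.GeneralLinearGroup (Fin m) ℂ)
    (hΛ : IsNaryRep P Λ) :
    Subgroup.closure (Set.range fun x : G => ((x, 0) : G × ZMod (n - 1))) = ⊤ ∧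
    (IsIrredSet (Set.range Λ) ↔ IsIrredSet (Set.range (starRep n a Λ))) := by
  haveI : NeZero (n - 1) := ⟨by omega⟩
  constructor
  · -- generation
    rw [eq_top_iff]
    rintro ⟨y, k⟩ -
    -- Step 1: realize every second coordinate inside the closure
    have step1 : ∀ t : ℕ, ∃ q ∈ Subgroup.closure
        (Set.range fun x : G => ((x, 0) : G × ZMod (n - 1))),
        q.2 = (t : ZMod (n - 1)) := by
      intro t
      induction t with
      | zero => exact ⟨(a, 0), Subgroup.subset_closure ⟨a, rfl⟩, by simp⟩
      | succ t ih =>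
        obtain ⟨q, hq, hq2⟩ := ih
        refine ⟨q * (a, 0), mul_mem hq (Subgroup.subset_closure ⟨a, rfl⟩), ?_⟩
        rw [hmul]
        show q.2 + (0 : ZMod (n - 1)) + 1 = _
        rw [hq2]
        push_cast
        ring
    obtain ⟨q, hq, hq2⟩ := step1 (k - 1).val
    rw [ZMod.natCast_rightInverse (k - 1)] at hq2
    -- basic facts about values
    have hvlt : q.2.val < n - 1 := ZMod.val_lt q.2
    have hwlt : (q.2 + 1).val < n - 1 := ZMod.val_lt _
    have hcast : ((q.2.val + 1 : ℕ) : ZMod (n - 1)) = q.2 + 1 := by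
      push_cast
      rw [ZMod.natCast_rightInverse q.2]
    have hwmod : (q.2 + 1).val = (q.2.val + 1) % (n - 1) := by
      rw [← hcast, ZMod.val_natCast]
    -- Step 2: solve for the first coordinate
    have hlen : (q.1 :: (List.replicate q.2.val a ++ P.skew a ::
        List.replicate (n - 2 - (q.2 + 1).val) a)).length = n - 1 ∨
        (q.1 :: (List.replicate q.2.val a ++ P.skew a ::
        List.replicate (n - 2 - (q.2 + 1).val) a)).length = 2 * n - 2 := by
      simp only [List.length_cons, List.length_append, List.length_replicate]
      rcases Nat.lt_or_ge (q.2.val + 1) (n - 1) with hc | hc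
      · rw [Nat.mod_eq_of_lt hc] at hwmod
        omega
      · have h1 : q.2.val + 1 = n - 1 := by omega
        rw [h1, Nat.mod_self] at hwmod
        omega
    obtain ⟨x, hx⟩ := fstar_cons_surj hn P _ hlen y
    have heq : ((x, 0) : G × ZMod (n - 1)) * q = (y, k) := by
      rw [hmul]
      unfold postMul
      simp only [ZMod.val_zero, List.replicate_zero, List.nil_append, zero_add]
      rw [hx, hq2]
      have hk : k - 1 + 1 = k := by ring
      rw [hk]
    rw [← heq]
    exact mul_mem (Subgroup.subset_closure ⟨x, rfl⟩) hq
  · -- irreducibility equivalence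
    constructor
    · intro hirr W hW
      refine hirr W ?_
      rintro g ⟨x, rfl⟩ v hv
      have hx0 : Λ x = starRep n a Λ (x, 0) := by
        simp [starRep, ZMod.val_zero]
      rw [hx0]
      exact hW _ ⟨(x, 0), rfl⟩ v hv
    · intro hirr W hW
      refine hirr W ?_
      rintro g ⟨⟨x, i⟩, rfl⟩ v hv
      have hpow : ∀ (k : ℕ) (v : Fin m → ℂ), v ∈ W →
          Matrix.mulVec ((Λ a : Matrix (Fin m) (Fin m) ℂ) ^ k) v ∈ W := by
        intro k
        induction k with
        | zero => intro v hv; simpa using hv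
        | succ k ih =>
          intro v hv
          rw [pow_succ, ← Matrix.mulVec_mulVec]
          exact ih _ (hW _ ⟨a, rfl⟩ _ hv)
      have hco : ((starRep n a Λ (x, i) : Matrix (Fin m) (Fin m) ℂ)) =
          (Λ x : Matrix (Fin m) (Fin m) ℂ) *
            (Λ a : Matrix (Fin m) (Fin m) ℂ) ^ i.val := by
        simp [starRep]
      rw [hco, ← Matrix.mulVec_mulVec]
      exact hW _ ⟨x, rfl⟩ _ (hpow _ v hv)
end
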